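/- Let X and Y be Banach spaces, δ > 0, and 1 < p ≤ ∞. If X ⊕_p Y is δ-average rough, then both X and Y are δ-average rough. -/

import Mathlib

open Filter Topology ENNReal

noncomputable section

/-- A Banach space `X` is `δ`-average rough if for every finite family of unit vectors
`x₁, …, xₙ`, one has `limsup_{‖y‖→0} (1/n) ∑ᵢ (‖xᵢ+y‖+‖xᵢ-y‖-2)/‖y‖ ≥ δ`. -/
def AverageRough (X : Type*) [NormedAddCommGroup X] [NormedSpace ℝ X] (δ : ℝ) : Prop :=
  ∀ n : ℕ, 0 < n → ∀ x : Fin n → X, (∀ i, ‖x i‖ = 1) →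
    δ ≤ Filter.limsup
      (fun y : X => (1 / (n : ℝ)) * ∑ i, (‖x i + y‖ + ‖x i - y‖ - 2) / ‖y‖) (𝓝[≠] 0)

/-! For `1 < p` the `ℓ^p`-norm is flat in the second coordinate wherever the first one is
bounded away from zero: `‖(s, t)‖_p ≤ s + ε t` for `s ≥ 1/2` and small `t` (Bernoulli's
inequality when `p < ∞`). So for a unit vector `a ∈ X` and a small `w = (u, v)` the roughness
quotient of `(a, 0)` in the direction `w` exceeds that of `a` in the direction `u` by at most `ε`,
as `‖u‖ ≤ ‖w‖`. Passing to limsups transfers average roughness from `X ⊕_p Y` to `X`, and the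
swap `X ⊕_p Y ≅ Y ⊕_p X` gives `Y`. -/

section Roughness

variable {E F : Type*} [NormedAddCommGroup E] [NormedAddCommGroup F]

def roughnessQuotient (x y : E) : ℝ := (‖x + y‖ + ‖x - y‖ - 2) / ‖y‖

def roughnessAverage {n : ℕ} (x : Fin n → E) (y : E) : ℝ :=
  (1 / (n : ℝ)) * ∑ i, roughnessQuotient (x i) y

theorem averageRough_iff [NormedSpace ℝ E] {δ : ℝ} :
    AverageRough E δ ↔ ∀ n : ℕ, 0 < n → ∀ x : Fin n → E, (∀ i, ‖x i‖ = 1) →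
      δ ≤ limsup (roughnessAverage x) (𝓝[≠] 0) :=
  Iff.rfl

theorem two_le_norm_add_add_norm_sub [NormedSpace ℝ E] {x : E} (hx : ‖x‖ = 1) (y : E) :
    2 ≤ ‖x + y‖ + ‖x - y‖ := by
  calc (2 : ℝ) = ‖(2 : ℝ) • x‖ := by rw [norm_smul, hx]; norm_num
    _ = ‖(x + y) + (x - y)‖ := by rw [add_add_sub_cancel, two_smul]
    _ ≤ ‖x + y‖ + ‖x - y‖ := norm_add_le _ _

theorem roughnessQuotient_nonneg [NormedSpace ℝ E] {x : E} (hx : ‖x‖ = 1) (y : E) :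
    0 ≤ roughnessQuotient x y :=
  div_nonneg (by linarith [two_le_norm_add_add_norm_sub hx y]) (norm_nonneg y)

theorem roughnessQuotient_le_two {x : E} (hx : ‖x‖ = 1) (y : E) : roughnessQuotient x y ≤ 2 :=
  div_le_of_le_mul₀ (norm_nonneg y) zero_le_two (by linarith [norm_add_le x y, norm_sub_le x y])

theorem roughnessQuotient_le_add [NormedSpace ℝ E] {x u : E} {z w : F} {ε : ℝ} (hx : ‖x‖ = 1)
    (hw : w ≠ 0) (hu : ‖u‖ ≤ ‖w‖) (h : ‖z + w‖ + ‖z - w‖ ≤ ‖x + u‖ + ‖x - u‖ + ε * ‖w‖) :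
    roughnessQuotient z w ≤ roughnessQuotient x u + ε := by
  have hw₀ : 0 < ‖w‖ := norm_pos_iff.2 hw
  have hxu := two_le_norm_add_add_norm_sub hx u
  calc roughnessQuotient z w ≤ (‖x + u‖ + ‖x - u‖ - 2) / ‖w‖ + ε := by
        rw [roughnessQuotient, div_add' _ _ _ hw₀.ne', div_le_div_iff_of_pos_right hw₀]
        linarith
    _ ≤ roughnessQuotient x u + ε := by
        gcongr
        rcases eq_or_ne u 0 with rfl | hu₀
        · norm_num [roughnessQuotient, hx]
        · exact div_le_div_of_nonneg_left (by linarith) (norm_pos_iff.2 hu₀) hu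

variable {n : ℕ}

theorem roughnessAverage_nonneg [NormedSpace ℝ E] {x : Fin n → E} (hx : ∀ i, ‖x i‖ = 1)
    (y : E) : 0 ≤ roughnessAverage x y :=
  mul_nonneg (by positivity) (Finset.sum_nonneg fun i _ => roughnessQuotient_nonneg (hx i) y)

theorem roughnessAverage_le_two {x : Fin n → E} (hx : ∀ i, ‖x i‖ = 1) (y : E) :
    roughnessAverage x y ≤ 2 := by
  calc roughnessAverage x y ≤ (1 / (n : ℝ)) * ∑ _i : Fin n, 2 := by
        unfold roughnessAverage
        gcongr with i
        exact roughnessQuotient_le_two (hx i) y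
    _ ≤ 2 := by
        rcases n.eq_zero_or_pos with rfl | hn
        · norm_num
        · rw [Finset.sum_const, Finset.card_univ, Fintype.card_fin, nsmul_eq_mul, ← mul_assoc,
            one_div_mul_cancel (by positivity), one_mul]

theorem roughnessAverage_zero (x : Fin n → E) : roughnessAverage x 0 = 0 := by
  simp [roughnessAverage, roughnessQuotient]

theorem roughnessAverage_le_add (hn : 0 < n) {x : Fin n → E} {z : Fin n → F} {u : E} {w : F}
    {ε : ℝ} (h : ∀ i, roughnessQuotient (z i) w ≤ roughnessQuotient (x i) u + ε) :
    roughnessAverage z w ≤ roughnessAverage x u + ε := by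
  calc roughnessAverage z w ≤ (1 / (n : ℝ)) * ∑ i, (roughnessQuotient (x i) u + ε) := by
        unfold roughnessAverage
        gcongr with i
        exact h i
    _ = roughnessAverage x u + ε := by
        rw [Finset.sum_add_distrib, Finset.sum_const, Finset.card_univ, Fintype.card_fin,
          nsmul_eq_mul, mul_add, ← mul_assoc, one_div_mul_cancel (by positivity), one_mul]
        rfl

end Roughness

theorem limsup_nhds_le_limsup_nhdsNE {α : Type*} [TopologicalSpace α] {f : α → ℝ} {a : α}
    (hcb : IsCoboundedUnder (· ≤ ·) (𝓝 a) f) (hb : IsBoundedUnder (· ≤ ·) (𝓝[≠] a) f)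
    (ha : f a ≤ limsup f (𝓝[≠] a)) : limsup f (𝓝 a) ≤ limsup f (𝓝[≠] a) := by
  refine forall_gt_imp_ge_iff_le_of_dense.1 fun c hc => limsup_le_of_le hcb ?_
  rw [← nhdsNE_sup_pure a, eventually_sup, eventually_pure]
  exact ⟨(eventually_lt_of_limsup_lt hc hb).mono fun _ => le_of_lt, ha.trans hc.le⟩

section Transfer

variable {E W : Type*} [NormedAddCommGroup E] [NormedSpace ℝ E]
  [NormedAddCommGroup W] [NormedSpace ℝ W]

theorem limsup_roughnessAverage_le_of_eventually_le [(𝓝[≠] (0 : E)).NeBot]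
    [(𝓝[≠] (0 : W)).NeBot] {n : ℕ} {x : Fin n → E} {z : Fin n → W} (hx : ∀ i, ‖x i‖ = 1)
    (hz : ∀ i, ‖z i‖ = 1) {π : W → E} (hπ : Tendsto π (𝓝[≠] 0) (𝓝 0))
    (h : ∀ ε > 0, ∀ᶠ w in 𝓝[≠] 0, roughnessAverage z w ≤ roughnessAverage x (π w) + ε) :
    limsup (roughnessAverage z) (𝓝[≠] 0) ≤ limsup (roughnessAverage x) (𝓝[≠] 0) := by
  set G := roughnessAverage x
  have hG₀ : ∀ y, 0 ≤ G y := roughnessAverage_nonneg hx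
  have hG₂ : ∀ y, G y ≤ 2 := roughnessAverage_le_two hx
  refine le_of_forall_pos_le_add fun ε hε => ?_
  calc limsup (roughnessAverage z) (𝓝[≠] 0) ≤ limsup (fun w => G (π w) + ε) (𝓝[≠] 0) :=
        limsup_le_limsup (h ε hε) (isCoboundedUnder_le_of_le _ (roughnessAverage_nonneg hz))
          (isBoundedUnder_of ⟨2 + ε, fun w => by linarith [hG₂ (π w)]⟩)
    _ = limsup (G ∘ π) (𝓝[≠] 0) + ε :=
        limsup_add_const _ _ _ (isBoundedUnder_of ⟨2, fun w => hG₂ (π w)⟩)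
          (isCoboundedUnder_le_of_le _ fun w => hG₀ (π w))
    _ ≤ limsup G (𝓝 0) + ε := by
        rw [limsup_comp]
        gcongr
        exact limsup_le_limsup_of_le hπ (isCoboundedUnder_le_of_le _ hG₀)
          (isBoundedUnder_of ⟨2, hG₂⟩)
    _ ≤ limsup G (𝓝[≠] 0) + ε := by
        -- `G 0 = 0` (a division by zero), so adding the point `0` does not raise the limsup
        gcongr
        refine limsup_nhds_le_limsup_nhdsNE (isCoboundedUnder_le_of_le _ hG₀)
          (isBoundedUnder_of ⟨2, hG₂⟩) ?_
        rw [show G 0 = 0 from roughnessAverage_zero x]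
        exact le_limsup_of_frequently_le (Frequently.of_forall hG₀) (isBoundedUnder_of ⟨2, hG₂⟩)

theorem AverageRough.of_linearIsometry {δ : ℝ} (ι : E →ₗᵢ[ℝ] W) (π : W →L[ℝ] E)
    (hπ : ∀ w, ‖π w‖ ≤ ‖w‖)
    (hι : ∀ ε > 0, ∀ᶠ w in 𝓝 0, ∀ a, ‖a‖ = 1 → ‖ι a + w‖ ≤ ‖a + π w‖ + ε * ‖w‖)
    (h : AverageRough W δ) : AverageRough E δ := by
  rw [averageRough_iff] at h ⊢
  intro n hn x hx
  have hιx : ∀ i, ‖ι (x i)‖ = 1 := fun i => (ι.norm_map _).trans (hx i)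
  have : Nontrivial E := nontrivial_of_ne (x ⟨0, hn⟩) 0 (norm_ne_zero_iff.1 (by simp [hx]))
  have : Nontrivial W := nontrivial_of_ne (ι (x ⟨0, hn⟩)) 0 (norm_ne_zero_iff.1 (by simp [hιx]))
  have hπ₀ : Tendsto π (𝓝[≠] 0) (𝓝 0) :=
    (π.continuous.tendsto' 0 0 (map_zero π)).mono_left nhdsWithin_le_nhds
  refine (h n hn _ hιx).trans
    (limsup_roughnessAverage_le_of_eventually_le hx hιx hπ₀ fun ε hε => ?_)
  filter_upwards [nhdsWithin_le_nhds (hι (ε / 2) (half_pos hε)), self_mem_nhdsWithin]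
    with w hw hw₀
  refine roughnessAverage_le_add hn fun i => roughnessQuotient_le_add (hx i) hw₀ (hπ w) ?_
  have hadd := hw (x i) (hx i)
  have hsub := hw (-x i) (by rw [norm_neg, hx i])
  rw [map_neg, neg_add_eq_sub, neg_add_eq_sub, norm_sub_rev w, norm_sub_rev (π w)] at hsub
  linarith

theorem AverageRough.of_linearIsometryEquiv {δ : ℝ} (e : W ≃ₗᵢ[ℝ] E) (h : AverageRough W δ) :
    AverageRough E δ := by
  rw [averageRough_iff] at h ⊢
  intro n hn x hx
  have hcomp : roughnessAverage x = roughnessAverage (e.symm ∘ x) ∘ e.symm := by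
    ext y
    simp only [roughnessAverage, roughnessQuotient, Function.comp_apply, ← map_add, ← map_sub,
      LinearIsometryEquiv.norm_map]
  rw [hcomp, limsup_comp, ← e.symm.coe_toHomeomorph, e.symm.toHomeomorph.map_punctured_nhds_eq,
    e.symm.coe_toHomeomorph, map_zero]
  exact h n hn _ fun i => (e.symm.norm_map _).trans (hx i)

end Transfer

theorem rpow_add_rpow_rpow_one_div_le {q s t ε : ℝ} (hq : 1 < q) (hs : 0 < s) (ht : 0 ≤ t)
    (hε : 0 ≤ ε) (hts : t ^ (q - 1) ≤ q * ε * s ^ (q - 1)) :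
    (s ^ q + t ^ q) ^ (1 / q) ≤ s + ε * t := by
  have hq₀ : 0 < q := by linarith
  rw [one_div, Real.rpow_inv_le_iff_of_pos (by positivity) (by positivity) hq₀]
  calc s ^ q + t ^ q = s ^ q + t ^ (q - 1) * t := by
        rw [← Real.rpow_add_one' ht (by linarith), sub_add_cancel]
    _ ≤ s ^ q + q * ε * s ^ (q - 1) * t := by gcongr
    _ = s ^ q * (1 + q * (ε * t / s)) := by
        rw [Real.rpow_sub_one hs.ne']; field_simp
    _ ≤ s ^ q * (1 + ε * t / s) ^ q := by
        gcongr
        have : 0 ≤ ε * t / s := by positivity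
        exact one_add_mul_self_le_rpow_one_add (by linarith) hq.le
    _ = (s + ε * t) ^ q := by
        rw [← Real.mul_rpow hs.le (by positivity)]; congr 1; field_simp

namespace WithLp

variable {p : ℝ≥0∞} [Fact (1 ≤ p)] {X Y : Type*} [NormedAddCommGroup X] [NormedAddCommGroup Y]

variable (p) (𝕜 : Type*) [Semiring 𝕜] [Module 𝕜 X] [Module 𝕜 Y] in
def inlₗᵢ : X →ₗᵢ[𝕜] WithLp p (X × Y) where
  toLinearMap := (WithLp.linearEquiv p 𝕜 (X × Y)).symm.toLinearMap ∘ₗ LinearMap.inl 𝕜 X Y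
  norm_map' := norm_toLp_fst p X Y

theorem prod_norm_le_norm_fst_add (hp : 1 < p) {ε : ℝ} (hε : 0 < ε) :
    ∃ η > 0, ∀ w : WithLp p (X × Y), 1 / 2 ≤ ‖w.fst‖ → ‖w.snd‖ ≤ η →
      ‖w‖ ≤ ‖w.fst‖ + ε * ‖w.snd‖ := by
  rcases eq_or_ne p ∞ with rfl | hp_top
  · refine ⟨1 / 2, by norm_num, fun w h₁ h₂ => ?_⟩
    rw [prod_norm_eq_sup, sup_eq_left.2 (h₂.trans h₁)]
    have := mul_nonneg hε.le (norm_nonneg w.snd)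
    linarith
  · set q := p.toReal
    have hq : 1 < q := by simpa using ENNReal.toReal_strict_mono hp_top hp
    -- `η ^ (q - 1) = q ε (1/2) ^ (q - 1)`, the hypothesis of `rpow_add_rpow_rpow_one_div_le`
    -- at `s = 1/2`
    set c := q * ε * (1 / 2) ^ (q - 1)
    have hc : 0 < c := by positivity
    refine ⟨c ^ (q - 1)⁻¹, by positivity, fun w h₁ h₂ => ?_⟩
    rw [prod_norm_eq_add (by linarith)]
    refine rpow_add_rpow_rpow_one_div_le hq (by linarith) (norm_nonneg _) hε.le ?_
    calc ‖w.snd‖ ^ (q - 1) ≤ (c ^ (q - 1)⁻¹) ^ (q - 1) := by gcongr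
      _ = c := Real.rpow_inv_rpow hc.le (by linarith)
      _ ≤ q * ε * ‖w.fst‖ ^ (q - 1) := by simp only [c]; gcongr

theorem eventually_norm_toLp_add_le (hp : 1 < p) {ε : ℝ} (hε : 0 < ε) :
    ∀ᶠ w in 𝓝 (0 : WithLp p (X × Y)), ∀ a : X, ‖a‖ = 1 →
      ‖toLp p (a, 0) + w‖ ≤ ‖a + w.fst‖ + ε * ‖w‖ := by
  obtain ⟨η, hη, hest⟩ := prod_norm_le_norm_fst_add (X := X) (Y := Y) hp hε
  filter_upwards [Metric.closedBall_mem_nhds 0 (lt_min hη one_half_pos)] with w hw a ha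
  rw [mem_closedBall_zero_iff, le_min_iff] at hw
  have h₁ := norm_fst_le (x := w)
  have h₂ := norm_snd_le (x := w)
  have hfst : (toLp p (a, 0) + w).fst = a + w.fst := rfl
  have hsnd : (toLp p (a, 0) + w).snd = w.snd := zero_add _
  calc ‖toLp p (a, 0) + w‖ ≤ ‖a + w.fst‖ + ε * ‖w.snd‖ := by
        have := hest (toLp p (a, 0) + w)
        rw [hfst, hsnd] at this
        exact this (by linarith [norm_sub_le_norm_add a w.fst]) (by linarith)
    _ ≤ ‖a + w.fst‖ + ε * ‖w‖ := by gcongr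

end WithLp

theorem AverageRough.of_withLp_prod_fst {p : ℝ≥0∞} [Fact (1 ≤ p)] {X Y : Type*}
    [NormedAddCommGroup X] [NormedSpace ℝ X] [NormedAddCommGroup Y] [NormedSpace ℝ Y] {δ : ℝ}
    (hp : 1 < p) (h : AverageRough (WithLp p (X × Y)) δ) : AverageRough X δ := by
  refine h.of_linearIsometry (WithLp.inlₗᵢ p ℝ) (WithLp.fstL p ℝ X Y) (WithLp.norm_fst_le X)
    fun ε hε => ?_
  exact WithLp.eventually_norm_toLp_add_le hp hε

theorem averageRough_of_prod_lp_general (X Y : Type*)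
    [NormedAddCommGroup X] [NormedSpace ℝ X]
    [NormedAddCommGroup Y] [NormedSpace ℝ Y]
    (p : ℝ≥0∞) [Fact (1 ≤ p)] (hp : 1 < p)
    (δ : ℝ) (h : AverageRough (WithLp p (X × Y)) δ) :
    AverageRough X δ ∧ AverageRough Y δ :=
  ⟨h.of_withLp_prod_fst hp,
    (h.of_linearIsometryEquiv (LinearIsometryEquiv.withLpProdComm p ℝ X Y)).of_withLp_prod_fst hp⟩

/-- If `X ⊕_p Y` is `δ`-average rough for some `1 < p ≤ ∞`, then both `X` and `Y` are
`δ`-average rough. -/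
theorem averageRough_of_prod_lp (X Y : Type*)
    [NormedAddCommGroup X] [NormedSpace ℝ X] [CompleteSpace X]
    [NormedAddCommGroup Y] [NormedSpace ℝ Y] [CompleteSpace Y]
    (p : ℝ≥0∞) [Fact (1 ≤ p)] (hp : 1 < p)
    (δ : ℝ) (hδ : 0 < δ) (h : AverageRough (WithLp p (X × Y)) δ) :
    AverageRough X δ ∧ AverageRough Y δ :=
  averageRough_of_prod_lp_general X Y p hp δ h
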